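/- arXiv:2402.18384 — 2 statements merged into one kernel-verified Lean document; each statement's English description precedes it below -/
import Mathlib

section
/- Let f and g be tropical polynomials in n variables. If Trop(f) ⊆ Trop(g), then for every vertex (extreme point) v of the Newton polyhedron N(g) ⊆ ℝ^{n+1} there exist a real number t > 0 and a translation s : ℝ^{n+1} → ℝ^{n+1} with v ∈ s(t·N(f)) and s(t·N(f)) ⊆ N(g). -/
open Finset

/-- A tropical polynomial in `n` variables: `k ≥ 1` monomials with exponent
vectors `a i : Fin n → ℕ` and coefficients `c i : ℝ`, the pairs `(a i, c i)`
being pairwise distinct. -/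
structure TropPoly (n : ℕ) where
  k : ℕ
  hk : 0 < k
  a : Fin k → Fin n → ℕ
  c : Fin k → ℝ
  distinct : Function.Injective (fun i => (a i, c i))

namespace TropPoly

variable {n : ℕ}

/-- Value of the `i`-th tropical monomial at `x`: `⟨a i, x⟩ + c i`. -/
def mono (f : TropPoly n) (i : Fin f.k) (x : Fin n → ℝ) : ℝ :=
  (∑ j, (f.a i j : ℝ) * x j) + f.c i

/-- Value of the tropical polynomial: `f(x) = min_i (⟨a i, x⟩ + c i)`. -/
def eval (f : TropPoly n) (x : Fin n → ℝ) : ℝ :=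
  Finset.univ.inf' ⟨⟨0, f.hk⟩, Finset.mem_univ _⟩ (fun i => f.mono i x)

/-- The tropical hypersurface `Trop(f)`: points where the minimum is attained
at least at two distinct monomials. -/
def tropSet (f : TropPoly n) : Set (Fin n → ℝ) :=
  {x | ∃ i j : Fin f.k, i ≠ j ∧ f.mono i x = f.eval x ∧ f.mono j x = f.eval x}

/-- The Newton polyhedron `N(f) ⊆ ℝ^{n+1}`: the convex hull of the union of
the vertical rays `{(a i, c) : c ≥ c i}`. -/
def newton (f : TropPoly n) : Set ((Fin n → ℝ) × ℝ) :=
  convexHull ℝ {p | ∃ i : Fin f.k, p.1 = (fun j => (f.a i j : ℝ)) ∧ f.c i ≤ p.2}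

end TropPoly

/-- The linear functional `φ_x(z, a) = ⟨x, z⟩ + a` on `ℝ^{n+1}`. -/
def phi {n : ℕ} (x : Fin n → ℝ) (p : (Fin n → ℝ) × ℝ) : ℝ :=
  (∑ j, x j * p.1 j) + p.2

/-- The convex cone generated by a set `S`: all nonnegative linear
combinations of elements of `S`. -/
def coneGen {E : Type*} [AddCommMonoid E] [Module ℝ E] (S : Set E) : Set E :=
  {y | ∃ (m : ℕ) (t : Fin m → ℝ) (p : Fin m → E),
    (∀ i, 0 ≤ t i) ∧ (∀ i, p i ∈ S) ∧ y = ∑ i, t i • p i}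

section ConeClosed

variable {E : Type*} [NormedAddCommGroup E] [NormedSpace ℝ E] [FiniteDimensional ℝ E]
variable {N : ℕ}

/-- Nonnegative combinations of `r` supported on `s`. -/
def csupp (r : Fin N → E) (s : Finset (Fin N)) : Set E :=
  {y | ∃ t : Fin N → ℝ, (∀ i, 0 ≤ t i) ∧ (∀ i ∉ s, t i = 0) ∧ y = ∑ i, t i • r i}

lemma csupp_caratheodory (r : Fin N → E) :
    ∀ s : Finset (Fin N), ∀ y ∈ csupp r s,
      ∃ s' ⊆ s, LinearIndependent ℝ (fun i : s' => r i) ∧ y ∈ csupp r s' := by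
  intro s
  induction s using Finset.strongInductionOn with
  | _ s ih =>
    intro y hy
    by_cases hli : LinearIndependent ℝ (fun i : s => r i)
    · exact ⟨s, subset_rfl, hli, hy⟩
    obtain ⟨t, ht0, hts, hty⟩ := hy
    have main : ∀ d : Fin N → ℝ, (∀ i ∉ s, d i = 0) → (∑ i, d i • r i = 0) →
        (∃ i, 0 < d i) → ∃ s₁ ⊂ s, y ∈ csupp r s₁ := by
      rintro d hds hd0 ⟨i₂, hi₂⟩
      have hi₂s : i₂ ∈ s := by
        by_contra hc; rw [hds i₂ hc] at hi₂; exact lt_irrefl 0 hi₂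
      set P := s.filter (fun i => 0 < d i) with hP
      have hPne : P.Nonempty := ⟨i₂, by simp [hP, hi₂s, hi₂]⟩
      obtain ⟨i₃, hi₃P, hmin⟩ := P.exists_min_image (fun i => t i / d i) hPne
      have hi₃s : i₃ ∈ s := (Finset.mem_filter.1 hi₃P).1
      have hd₃ : 0 < d i₃ := (Finset.mem_filter.1 hi₃P).2
      set ρ := t i₃ / d i₃ with hρ
      have hρ0 : 0 ≤ ρ := div_nonneg (ht0 _) hd₃.le
      set t' : Fin N → ℝ := fun i => t i - ρ * d i with ht'
      have ht'0 : ∀ i, 0 ≤ t' i := by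
        intro i
        rcases lt_or_ge 0 (d i) with hdi | hdi
        · have his : i ∈ P := by
            refine Finset.mem_filter.2 ⟨?_, hdi⟩
            by_contra hc; rw [hds i hc] at hdi; exact lt_irrefl 0 hdi
          have h1 : ρ ≤ t i / d i := hmin i his
          have h2 : ρ * d i ≤ t i := (le_div_iff₀ hdi).1 h1
          simp only [ht']; linarith
        · have h1 : ρ * d i ≤ 0 := mul_nonpos_of_nonneg_of_nonpos hρ0 hdi
          have h2 := ht0 i
          simp only [ht']; linarith
      have ht'3 : t' i₃ = 0 := by
        simp only [ht', hρ]
        rw [div_mul_cancel₀ _ hd₃.ne']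
        ring
      have ht's : ∀ i ∉ s.erase i₃, t' i = 0 := by
        intro i hi
        by_cases his : i ∈ s
        · have : i = i₃ := by
            by_contra hne
            exact hi (Finset.mem_erase.2 ⟨hne, his⟩)
          rw [this]; exact ht'3
        · simp only [ht', hts i his, hds i his]; ring
      have hsum : y = ∑ i, t' i • r i := by
        have : ∑ i, t' i • r i = (∑ i, t i • r i) - ρ • ∑ i, d i • r i := by
          rw [Finset.smul_sum, ← Finset.sum_sub_distrib]
          congr 1; funext i
          simp only [ht', sub_smul, mul_smul]
        rw [this, hd0, smul_zero, sub_zero, hty]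
      exact ⟨s.erase i₃, Finset.erase_ssubset hi₃s, t', ht'0, ht's, hsum⟩
    obtain ⟨g, hg0, i₁, hg1⟩ := Fintype.not_linearIndependent_iff.1 hli
    set gg : Fin N → ℝ := fun i => if h : i ∈ s then g ⟨i, h⟩ else 0 with hgg
    have hggs : ∀ i ∉ s, gg i = 0 := fun i hi => by simp [hgg, hi]
    have hgg0 : ∑ i, gg i • r i = 0 := by
      have h1 : ∑ i, gg i • r i = ∑ i ∈ s, gg i • r i := by
        refine (Finset.sum_subset (Finset.subset_univ s) ?_).symm
        intro i _ hi; rw [hggs i hi, zero_smul]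
      have h2 : ∑ i ∈ s, gg i • r i = ∑ i : s, g i • r ↑i := by
        rw [← Finset.sum_coe_sort s (fun i => gg i • r i)]
        refine Finset.sum_congr rfl fun i _ => ?_
        congr 1
        simp [hgg]
      rw [h1, h2, hg0]
    have hstep : ∃ s₁ ⊂ s, y ∈ csupp r s₁ := by
      rcases lt_or_ge 0 (g i₁) with hpos | hle
      · refine main gg hggs hgg0 ⟨i₁, ?_⟩
        simp only [hgg, Finset.coe_mem, dif_pos, Subtype.coe_eta]
        exact hpos
      · have hneg : g i₁ < 0 := lt_of_le_of_ne hle hg1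
        refine main (-gg) (fun i hi => by simp [hggs i hi]) ?_ ⟨i₁, ?_⟩
        · simp only [Pi.neg_apply, neg_smul, Finset.sum_neg_distrib, hgg0, neg_zero]
        · simp only [Pi.neg_apply, neg_pos, hgg, Finset.coe_mem, dif_pos,
            Subtype.coe_eta]
          exact hneg
    obtain ⟨s₁, hsub, hy₁⟩ := hstep
    obtain ⟨s', h's, hli', hy'⟩ := ih s₁ hsub y hy₁
    exact ⟨s', h's.trans hsub.subset, hli', hy'⟩

lemma csupp_isClosed_of_li (r : Fin N → E) (s : Finset (Fin N))
    (hli : LinearIndependent ℝ (fun i : s => r i)) : IsClosed (csupp r s) := by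
  classical
  let L : (s → ℝ) →ₗ[ℝ] E :=
    { toFun := fun t => ∑ i : s, t i • r ↑i
      map_add' := by
        intro t₁ t₂
        rw [← Finset.sum_add_distrib]
        refine Finset.sum_congr rfl fun i _ => ?_
        rw [Pi.add_apply, add_smul]
      map_smul' := by
        intro c t
        rw [Finset.smul_sum]
        refine Finset.sum_congr rfl fun i _ => ?_
        rw [Pi.smul_apply, smul_eq_mul, RingHom.id_apply, mul_smul] }
  have hker : LinearMap.ker L = ⊥ := by
    rw [LinearMap.ker_eq_bot']
    intro t ht
    funext i
    exact Fintype.linearIndependent_iff.1 hli t ht i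
  have hQ : IsClosed {t : s → ℝ | ∀ i, 0 ≤ t i} := by
    have : {t : s → ℝ | ∀ i, 0 ≤ t i} = ⋂ i, {t : s → ℝ | 0 ≤ t i} := by
      ext t; simp [Set.mem_iInter]
    rw [this]
    exact isClosed_iInter fun i => isClosed_le continuous_const (continuous_apply i)
  have himg : csupp r s = L '' {t : s → ℝ | ∀ i, 0 ≤ t i} := by
    ext y
    constructor
    · rintro ⟨t, ht0, hts, rfl⟩
      refine ⟨fun i => t ↑i, fun i => ht0 _, ?_⟩
      show ∑ i : s, t ↑i • r ↑i = ∑ i, t i • r i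
      rw [Finset.sum_coe_sort s (fun i => t i • r i)]
      refine Finset.sum_subset (Finset.subset_univ s) ?_
      intro i _ hi; rw [hts i hi, zero_smul]
    · rintro ⟨t, ht0, rfl⟩
      refine ⟨fun i => if h : i ∈ s then t ⟨i, h⟩ else 0, ?_, ?_, ?_⟩
      · intro i; by_cases h : i ∈ s <;> simp [h, ht0 ⟨i, _⟩]
      · intro i hi; simp [hi]
      · show ∑ i : s, t i • r ↑i = _
        have h1 : ∑ i : Fin N, (fun i => if h : i ∈ s then t ⟨i, h⟩ else 0) i • r i
            = ∑ i ∈ s, (if h : i ∈ s then t ⟨i, h⟩ else 0) • r i := by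
          refine (Finset.sum_subset (Finset.subset_univ s) ?_).symm
          intro i _ hi; simp [hi]
        rw [h1, ← Finset.sum_coe_sort s
          (fun i => (if h : i ∈ s then t ⟨i, h⟩ else 0) • r i)]
        refine Finset.sum_congr rfl fun i _ => ?_
        congr 1
        simp
  rw [himg]
  exact ((LinearMap.isClosedEmbedding_of_injective hker).isClosedMap _ hQ)

lemma csupp_univ_isClosed (r : Fin N → E) : IsClosed (csupp r Finset.univ) := by
  classical
  have hU : csupp r Finset.univ = ⋃ s : Finset (Fin N),
      (if LinearIndependent ℝ (fun i : s => r i) then csupp r s else ∅) := by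
    ext y
    constructor
    · intro hy
      obtain ⟨s', _, hli, hy'⟩ := csupp_caratheodory r Finset.univ y hy
      exact Set.mem_iUnion.2 ⟨s', by rw [if_pos hli]; exact hy'⟩
    · intro hy
      obtain ⟨s, hs⟩ := Set.mem_iUnion.1 hy
      by_cases hli : LinearIndependent ℝ (fun i : s => r i)
      · rw [if_pos hli] at hs
        obtain ⟨t, ht0, _, rfl⟩ := hs
        exact ⟨t, ht0, fun i hi => absurd (Finset.mem_univ i) hi, rfl⟩
      · rw [if_neg hli] at hs; exact absurd hs (Set.notMem_empty y)
  rw [hU]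
  refine isClosed_iUnion_of_finite fun s => ?_
  split_ifs with hli
  · exact csupp_isClosed_of_li r s hli
  · exact isClosed_empty

lemma csupp_univ_convex (r : Fin N → E) : Convex ℝ (csupp r Finset.univ) := by
  rintro y₁ ⟨t₁, ht₁, -, rfl⟩ y₂ ⟨t₂, ht₂, -, rfl⟩ a b ha hb hab
  refine ⟨fun i => a * t₁ i + b * t₂ i,
    fun i => add_nonneg (mul_nonneg ha (ht₁ i)) (mul_nonneg hb (ht₂ i)),
    fun i hi => absurd (Finset.mem_univ i) hi, ?_⟩
  rw [Finset.smul_sum, Finset.smul_sum, ← Finset.sum_add_distrib]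
  refine Finset.sum_congr rfl fun i _ => ?_
  rw [add_smul, smul_smul, smul_smul, mul_smul, mul_smul]

end ConeClosed

section TropAux

open TropPoly

variable {n : ℕ}

/-- The generator point of the Newton polyhedron for monomial `m`. -/
def Qpt (g : TropPoly n) (m : Fin g.k) : (Fin n → ℝ) × ℝ :=
  ((fun j => (g.a m j : ℝ)), g.c m)

lemma Qpt_inj (g : TropPoly n) : Function.Injective (Qpt g) := by
  intro m m' hmm
  have h1 : (fun j => (g.a m j : ℝ)) = fun j => (g.a m' j : ℝ) := congrArg Prod.fst hmm
  have h2 : g.c m = g.c m' := congrArg Prod.snd hmm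
  apply g.distinct
  refine Prod.ext ?_ h2
  funext j
  have := congrFun h1 j
  exact_mod_cast this

/-- `phi x` as a linear map in the second argument. -/
def phiL (x : Fin n → ℝ) : ((Fin n → ℝ) × ℝ) →ₗ[ℝ] ℝ where
  toFun := phi x
  map_add' p q := by
    simp only [phi, Prod.fst_add, Prod.snd_add, Pi.add_apply]
    have : ∑ j, x j * (p.1 j + q.1 j) = ∑ j, x j * p.1 j + ∑ j, x j * q.1 j := by
      rw [← Finset.sum_add_distrib]
      exact Finset.sum_congr rfl fun j _ => by ring
    rw [this]; ring
  map_smul' c p := by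
    simp only [phi, Prod.smul_fst, Prod.smul_snd, Pi.smul_apply, smul_eq_mul,
      RingHom.id_apply]
    rw [mul_add, Finset.mul_sum]
    congr 1
    exact Finset.sum_congr rfl fun j _ => by ring

lemma phi_apply (x : Fin n → ℝ) (p : (Fin n → ℝ) × ℝ) : phi x p = phiL x p := rfl

lemma phi_Q (g : TropPoly n) (m : Fin g.k) (x : Fin n → ℝ) :
    phi x (Qpt g m) = g.mono m x := by
  simp only [phi, Qpt, TropPoly.mono]
  congr 1
  exact Finset.sum_congr rfl fun j _ => by ring

lemma phi_e (x : Fin n → ℝ) : phi x ((0 : Fin n → ℝ), (1 : ℝ)) = 1 := by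
  simp [phi]

lemma phi_affine (x₁ x₂ : Fin n → ℝ) {a b : ℝ} (hab : a + b = 1)
    (p : (Fin n → ℝ) × ℝ) :
    phi (a • x₁ + b • x₂) p = a * phi x₁ p + b * phi x₂ p := by
  simp only [phi, Pi.add_apply, Pi.smul_apply, smul_eq_mul]
  have : ∑ j, (a * x₁ j + b * x₂ j) * p.1 j
      = a * ∑ j, x₁ j * p.1 j + b * ∑ j, x₂ j * p.1 j := by
    rw [Finset.mul_sum, Finset.mul_sum, ← Finset.sum_add_distrib]
    exact Finset.sum_congr rfl fun j _ => by ring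
  rw [this]
  linear_combination -p.2 * hab

lemma continuous_phi (p : (Fin n → ℝ) × ℝ) :
    Continuous fun x : Fin n → ℝ => phi x p :=
  (continuous_finset_sum _ fun j _ =>
    (continuous_apply j).mul continuous_const).add continuous_const

lemma eval_le (f : TropPoly n) (i : Fin f.k) (x : Fin n → ℝ) :
    f.eval x ≤ f.mono i x :=
  Finset.inf'_le _ (Finset.mem_univ i)

lemma exists_argmin (f : TropPoly n) (x : Fin n → ℝ) :
    ∃ i, f.mono i x = f.eval x := by
  obtain ⟨i, -, hi⟩ := Finset.exists_mem_eq_inf'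
    (⟨⟨0, f.hk⟩, Finset.mem_univ _⟩ : (Finset.univ : Finset (Fin f.k)).Nonempty)
    (fun i => f.mono i x)
  exact ⟨i, hi.symm⟩

/-- decomposition of a linear functional against the standard basis -/
lemma lin_decomp (ψ : ((Fin n → ℝ) × ℝ) →ₗ[ℝ] ℝ) (p : (Fin n → ℝ) × ℝ) :
    ψ p = ∑ j, p.1 j * ψ ((Pi.single j 1 : Fin n → ℝ), 0)
      + p.2 * ψ ((0 : Fin n → ℝ), 1) := by
  have hp : p = (∑ j, p.1 j • (((Pi.single j 1 : Fin n → ℝ), (0 : ℝ))))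
      + p.2 • (((0 : Fin n → ℝ), (1 : ℝ))) := by
    refine Prod.ext ?_ ?_
    · simp only [Prod.fst_add, Prod.fst_sum, Prod.smul_fst, Prod.smul_snd,
        smul_eq_mul, Prod.snd_add, Prod.snd_sum]
      funext k
      simp only [Pi.add_apply, Finset.sum_apply, Pi.smul_apply, Pi.single_apply,
        smul_eq_mul, mul_ite, mul_one, mul_zero, Finset.sum_ite_eq',
        Finset.sum_ite_eq, Finset.mem_univ, if_true, smul_zero, Pi.zero_apply,
        add_zero]
    · simp only [Prod.snd_add, Prod.snd_sum, Prod.smul_snd, smul_eq_mul,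
        mul_zero, Finset.sum_const_zero, zero_add, mul_one]
  conv_lhs => rw [hp]
  rw [map_add, map_sum, map_smul, smul_eq_mul]
  congr 1
  exact Finset.sum_congr rfl fun j _ => by rw [map_smul, smul_eq_mul]

/-- phi of the normalized functional -/
lemma phi_normalized (L : ((Fin n → ℝ) × ℝ) →ₗ[ℝ] ℝ)
    (hLe : L ((0 : Fin n → ℝ), (1 : ℝ)) ≠ 0) (p : (Fin n → ℝ) × ℝ) :
    phi (fun j => L ((Pi.single j 1 : Fin n → ℝ), 0) / L ((0 : Fin n → ℝ), (1 : ℝ))) p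
      = L p / L ((0 : Fin n → ℝ), (1 : ℝ)) := by
  set D := L ((0 : Fin n → ℝ), (1 : ℝ)) with hD
  rw [eq_div_iff hLe]
  simp only [phi]
  rw [lin_decomp L p, add_mul, Finset.sum_mul]
  congr 1
  exact Finset.sum_congr rfl fun j _ => by field_simp

lemma gens_def (f : TropPoly n) : f.newton =
    convexHull ℝ {p : (Fin n → ℝ) × ℝ | ∃ i : Fin f.k,
      p.1 = (fun j => (f.a i j : ℝ)) ∧ f.c i ≤ p.2} := rfl

lemma Qpt_mem_newton (f : TropPoly n) (i : Fin f.k) : Qpt f i ∈ f.newton :=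
  subset_convexHull ℝ _ ⟨i, rfl, le_refl _⟩

lemma newton_convex (f : TropPoly n) : Convex ℝ f.newton := convex_convexHull ℝ _

lemma newton_up (f : TropPoly n) {z : (Fin n → ℝ) × ℝ} (hz : z ∈ f.newton)
    {s : ℝ} (hs : 0 ≤ s) : z + ((0 : Fin n → ℝ), s) ∈ f.newton := by
  have hsub : f.newton ⊆ (fun p => p + ((0 : Fin n → ℝ), s)) ⁻¹' f.newton := by
    apply convexHull_min
    · rintro p ⟨i, h1, h2⟩
      refine subset_convexHull ℝ _ ⟨i, ?_, ?_⟩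
      · show p.1 + 0 = _
        rw [add_zero]; exact h1
      · show f.c i ≤ p.2 + s
        linarith
    · intro y₁ h₁ y₂ h₂ a b ha hb hab
      show a • y₁ + b • y₂ + ((0 : Fin n → ℝ), s) ∈ f.newton
      have heq : a • y₁ + b • y₂ + ((0 : Fin n → ℝ), s)
          = a • (y₁ + ((0 : Fin n → ℝ), s)) + b • (y₂ + ((0 : Fin n → ℝ), s)) := by
        rw [smul_add, smul_add, add_add_add_comm, ← add_smul, hab, one_smul]
      rw [heq]
      exact (newton_convex f) h₁ h₂ ha hb hab
  exact hsub hz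

end TropAux

section TropAux2

open TropPoly Pointwise

variable {n : ℕ}

lemma vertex_eq_Qpt (g : TropPoly n) {v : (Fin n → ℝ) × ℝ}
    (hv : v ∈ Set.extremePoints ℝ g.newton) : ∃ i₀, v = Qpt g i₀ := by
  have hvS := extremePoints_convexHull_subset hv
  obtain ⟨i₀, h1, h2⟩ := hvS
  rcases eq_or_lt_of_le h2 with heq | hlt
  · exact ⟨i₀, Prod.ext h1 heq.symm⟩
  · exfalso
    set x₁ : (Fin n → ℝ) × ℝ := (v.1, g.c i₀) with hx₁
    have hx₁mem : x₁ ∈ g.newton := subset_convexHull ℝ _ ⟨i₀, h1, le_refl _⟩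
    set x₂ : (Fin n → ℝ) × ℝ := v + ((0 : Fin n → ℝ), v.2 - g.c i₀) with hx₂
    have hx₂mem : x₂ ∈ g.newton := newton_up g hv.1 (by linarith)
    have hseg : v ∈ openSegment ℝ x₁ x₂ := by
      refine ⟨1/2, 1/2, by norm_num, by norm_num, by norm_num, ?_⟩
      refine Prod.ext ?_ ?_
      · show (1/2 : ℝ) • x₁.1 + (1/2 : ℝ) • x₂.1 = v.1
        rw [hx₁, hx₂]
        show (1/2 : ℝ) • v.1 + (1/2 : ℝ) • (v.1 + 0) = v.1
        rw [add_zero, ← add_smul]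
        norm_num
      · show (1/2 : ℝ) * x₁.2 + (1/2 : ℝ) * x₂.2 = v.2
        rw [hx₁, hx₂]
        show (1/2 : ℝ) * g.c i₀ + (1/2 : ℝ) * (v.2 + (v.2 - g.c i₀)) = v.2
        ring
    have := (mem_extremePoints.1 hv).2 x₁ hx₁mem x₂ hx₂mem hseg
    have h3 : x₁.2 = v.2 := congrArg Prod.snd this.1
    rw [hx₁] at h3
    exact absurd h3 (ne_of_lt hlt)

lemma exists_exposing (g : TropPoly n) {v : (Fin n → ℝ) × ℝ}
    (hv : v ∈ Set.extremePoints ℝ g.newton) :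
    ∃ x₀ : Fin n → ℝ, ∀ m, Qpt g m ≠ v → phi x₀ v < phi x₀ (Qpt g m) := by
  classical
  by_cases hall : ∀ m, Qpt g m = v
  · exact ⟨0, fun m hm => absurd (hall m) hm⟩
  push_neg at hall
  obtain ⟨m₀, hm₀⟩ := hall
  set T : Set ((Fin n → ℝ) × ℝ) := Qpt g '' {m | Qpt g m ≠ v} with hT
  have hTfin : T.Finite := (Set.toFinite _).image _
  set R : Set ((Fin n → ℝ) × ℝ) := {p | p.1 = 0} ∩ {p | 0 ≤ p.2} with hR
  have hRclosed : IsClosed R :=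
    (isClosed_eq continuous_fst continuous_const).inter
      (isClosed_le continuous_const continuous_snd)
  have hRconv : Convex ℝ R := by
    rintro p ⟨hp1, hp2⟩ q ⟨hq1, hq2⟩ a b ha hb hab
    constructor
    · show a • p.1 + b • q.1 = 0
      rw [Set.mem_setOf_eq] at hp1 hq1
      rw [hp1, hq1, smul_zero, smul_zero, add_zero]
    · show (0:ℝ) ≤ a * p.2 + b * q.2
      exact add_nonneg (mul_nonneg ha hp2) (mul_nonneg hb hq2)
  set A : Set ((Fin n → ℝ) × ℝ) := convexHull ℝ T + R with hA
  have hAclosed : IsClosed A := IsClosed.add_left_of_isCompact hRclosed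
    (hTfin.isCompact_convexHull (𝕜 := ℝ))
  have hAconv : Convex ℝ A := (convex_convexHull ℝ T).add hRconv
  have hTnewton : convexHull ℝ T ⊆ g.newton := by
    apply convexHull_min ?_ (newton_convex g)
    rintro p ⟨m, -, rfl⟩
    exact Qpt_mem_newton g m
  have hvA : v ∉ A := by
    rintro ⟨z, hz, p, ⟨hp1, hp2⟩, hzp⟩
    rw [Set.mem_setOf_eq] at hp1
    rw [Set.mem_setOf_eq] at hp2
    rcases eq_or_lt_of_le hp2 with heq | hpos
    · have hp0 : p = 0 := Prod.ext hp1 heq.symm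
      rw [hp0] at hzp
      have hzv : z = v := by simpa using hzp
      subst hzv
      have hvext : z ∈ Set.extremePoints ℝ (convexHull ℝ T) := by
        rw [mem_extremePoints]
        exact ⟨hz, fun x₁ h₁ x₂ h₂ hseg =>
          (mem_extremePoints.1 hv).2 x₁ (hTnewton h₁) x₂ (hTnewton h₂) hseg⟩
      obtain ⟨m, hm, hmv⟩ := extremePoints_convexHull_subset hvext
      exact hm hmv
    · set x₂ : (Fin n → ℝ) × ℝ := v + ((0 : Fin n → ℝ), 1) with hx₂
      have hx₂mem : x₂ ∈ g.newton := newton_up g hv.1 zero_le_one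
      have hz' : z ∈ g.newton := hTnewton hz
      have hp2pos : (0:ℝ) < 1 + p.2 := by linarith
      have hseg : v ∈ openSegment ℝ z x₂ := by
        refine ⟨1/(1+p.2), p.2/(1+p.2), by positivity, by positivity,
          by field_simp, ?_⟩
        have hzv : z = v - p := eq_sub_of_add_eq hzp
        refine Prod.ext ?_ ?_
        · show (1/(1+p.2)) • z.1 + (p.2/(1+p.2)) • x₂.1 = v.1
          have hz1 : z.1 = v.1 := by
            rw [hzv]; show v.1 - p.1 = v.1; rw [hp1, sub_zero]
          have hx21 : x₂.1 = v.1 := by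
            rw [hx₂]; show v.1 + 0 = v.1; rw [add_zero]
          rw [hz1, hx21, ← add_smul]
          have : 1/(1+p.2) + p.2/(1+p.2) = 1 := by field_simp
          rw [this, one_smul]
        · show (1/(1+p.2)) * z.2 + (p.2/(1+p.2)) * x₂.2 = v.2
          have hz2 : z.2 = v.2 - p.2 := by rw [hzv]; rfl
          have hx22 : x₂.2 = v.2 + 1 := by rw [hx₂]; rfl
          rw [hz2, hx22]
          field_simp
          ring
      have := (mem_extremePoints.1 hv).2 z hz' x₂ hx₂mem hseg
      have hz2 : z.2 = v.2 - p.2 := by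
        have hzv : z = v - p := eq_sub_of_add_eq hzp
        rw [hzv]; rfl
      rw [this.1] at hz2
      linarith
  obtain ⟨ℓ, u, hvu, hgtA⟩ := geometric_hahn_banach_point_closed hAconv hAclosed hvA
  have hQA : ∀ m, Qpt g m ≠ v → Qpt g m ∈ A := by
    intro m hm
    have h1 : Qpt g m ∈ convexHull ℝ T := subset_convexHull ℝ T ⟨m, hm, rfl⟩
    have h2 : (0 : (Fin n → ℝ) × ℝ) ∈ R := by
      refine Set.mem_inter ?_ ?_
      · show ((0 : (Fin n → ℝ) × ℝ)).1 = 0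
        rfl
      · show (0:ℝ) ≤ ((0 : (Fin n → ℝ) × ℝ)).2
        exact le_refl 0
    simpa using Set.add_mem_add h1 h2
  have hQgt : ∀ m, Qpt g m ≠ v → ℓ v < ℓ (Qpt g m) :=
    fun m hm => hvu.trans (hgtA _ (hQA m hm))
  set e : (Fin n → ℝ) × ℝ := ((0 : Fin n → ℝ), (1 : ℝ)) with he
  have hle : 0 ≤ ℓ e := by
    by_contra hneg
    push_neg at hneg
    have hu0 : u < ℓ (Qpt g m₀) := hgtA _ (hQA m₀ hm₀)
    set σ := (u - ℓ (Qpt g m₀) - 1)/ℓ e with hσ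
    have hσ0 : 0 ≤ σ := div_nonneg_of_nonpos (by linarith) hneg.le
    have hmem : Qpt g m₀ + σ • e ∈ A := by
      refine Set.add_mem_add (subset_convexHull ℝ T ⟨m₀, hm₀, rfl⟩)
        (Set.mem_inter ?_ ?_)
      · show σ • e.1 = 0
        rw [he]; show σ • (0 : Fin n → ℝ) = 0; rw [smul_zero]
      · show (0:ℝ) ≤ σ • e.2
        rw [he]; show (0:ℝ) ≤ σ • (1:ℝ)
        rw [smul_eq_mul, mul_one]; exact hσ0
    have h6 := hgtA _ hmem
    rw [map_add, map_smul, smul_eq_mul, hσ, div_mul_cancel₀ _ hneg.ne] at h6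
    linarith
  set F := Finset.univ.filter (fun m => Qpt g m ≠ v) with hF
  have hFne : F.Nonempty := ⟨m₀, by simp [hF, hm₀]⟩
  set ε := F.inf' hFne (fun m => (ℓ (Qpt g m) - ℓ v) / (|v.2 - (Qpt g m).2| + 1))
    with hε
  have hε0 : 0 < ε := by
    rw [hε]
    rw [Finset.lt_inf'_iff]
    intro m hm
    have hm' : Qpt g m ≠ v := (Finset.mem_filter.1 hm).2
    exact div_pos (sub_pos.2 (hQgt m hm')) (by positivity)
  set L2 : ((Fin n → ℝ) × ℝ) →ₗ[ℝ] ℝ :=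
    ℓ.toLinearMap + ε • LinearMap.snd ℝ (Fin n → ℝ) ℝ with hL2def
  have hL2 : ∀ p : (Fin n → ℝ) × ℝ, L2 p = ℓ p + ε * p.2 := fun p => rfl
  have hL2e : 0 < L2 e := by
    rw [hL2]
    have h9 : e.2 = 1 := rfl
    rw [h9, mul_one]
    linarith
  have hL2lt : ∀ m, Qpt g m ≠ v → L2 v < L2 (Qpt g m) := by
    intro m hm
    rw [hL2, hL2]
    have h1 : ε ≤ (ℓ (Qpt g m) - ℓ v)/(|v.2 - (Qpt g m).2| + 1) := by
      rw [hε]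
      exact Finset.inf'_le _ (by simp [hF, hm])
    have hd : (0:ℝ) < |v.2 - (Qpt g m).2| + 1 := by positivity
    have h4 : ε * (|v.2 - (Qpt g m).2| + 1) ≤ ℓ (Qpt g m) - ℓ v :=
      (le_div_iff₀ hd).1 h1
    have h2 : ε * (v.2 - (Qpt g m).2) ≤ ε * |v.2 - (Qpt g m).2| :=
      mul_le_mul_of_nonneg_left (le_abs_self _) hε0.le
    nlinarith
  refine ⟨fun j => L2 ((Pi.single j 1 : Fin n → ℝ), 0) / L2 e, fun m hm => ?_⟩
  rw [he] at hL2e ⊢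
  rw [phi_normalized L2 hL2e.ne', phi_normalized L2 hL2e.ne']
  have hlt' := hL2lt m hm
  gcongr

end TropAux2

/-- if `Trop(f) ⊆ Trop(g)`, then for every extreme point `v` of
`N(g)` some translate of a homothety `t · N(f)` (with `t > 0`) is inscribed in
`N(g)` at `v`. -/
theorem totally_inscribable_of_trop_subset {n : ℕ} (f g : TropPoly n)
    (h : f.tropSet ⊆ g.tropSet) :
    ∀ v ∈ Set.extremePoints ℝ g.newton,
      ∃ t : ℝ, 0 < t ∧ ∃ b : (Fin n → ℝ) × ℝ,
        v ∈ (fun y => t • y + b) '' f.newton ∧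
          (fun y => t • y + b) '' f.newton ⊆ g.newton := by
  classical
  intro v hv
  obtain ⟨i₀, hvi⟩ := vertex_eq_Qpt g hv
  obtain ⟨x₀, hx₀⟩ := exists_exposing g hv
  set U : Set (Fin n → ℝ) := {x | ∀ m, Qpt g m ≠ v → phi x v < phi x (Qpt g m)}
    with hU
  have hx₀U : x₀ ∈ U := hx₀
  have hUconv : Convex ℝ U := by
    intro x₁ h₁ x₂ h₂ a b ha hb hab
    intro m hm
    rw [phi_affine x₁ x₂ hab, phi_affine x₁ x₂ hab]
    rcases eq_or_lt_of_le ha with ha' | ha'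
    · have hb1 : b = 1 := by linarith
      rw [← ha', hb1]
      simpa using h₂ m hm
    · exact add_lt_add_of_lt_of_le (mul_lt_mul_of_pos_left (h₁ m hm) ha')
        (mul_le_mul_of_nonneg_left (h₂ m hm).le hb)
  have hUg : ∀ x ∈ U, ∀ m, m ≠ i₀ → g.mono i₀ x < g.mono m x := by
    intro x hx m hm
    by_cases hQm : Qpt g m = v
    · exact absurd (Qpt_inj g (hQm.trans hvi)) hm
    · have := hx m hQm
      rw [hvi, phi_Q, phi_Q] at this
      exact this
  have hUtropg : ∀ x ∈ U, x ∉ g.tropSet := by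
    rintro x hx ⟨i, j, hij, hi, hj⟩
    have key : ∀ m, g.mono m x = g.eval x → m = i₀ := by
      intro m hm
      by_contra hne
      have h1 := hUg x hx m hne
      have h2 : g.eval x ≤ g.mono i₀ x := eval_le g i₀ x
      linarith [hm.le, hm.ge]
    exact hij ((key i hi).trans (key j hj).symm)
  have hUtropf : ∀ x ∈ U, x ∉ f.tropSet := fun x hx hf => hUtropg x hx (h hf)
  have hstrict : ∀ x ∈ U, ∀ j, f.mono j x = f.eval x →
      ∀ m, m ≠ j → f.mono j x < f.mono m x := by
    intro x hx j hj m hm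
    have h1 : f.eval x ≤ f.mono m x := eval_le f m x
    rcases eq_or_lt_of_le h1 with heq | hlt
    · exact absurd ⟨m, j, hm, heq.symm, hj⟩ (hUtropf x hx)
    · rw [hj]; exact hlt
  obtain ⟨j₀, hj₀⟩ := exists_argmin f x₀
  -- constancy of the f-argmin on U
  have hD : ∀ x ∈ U, ∀ m, f.mono j₀ x ≤ f.mono m x := by
    by_contra hcon
    push_neg at hcon
    obtain ⟨x₁, hx₁U, m₁, hm₁⟩ := hcon
    have hmono_cont : ∀ (j : Fin f.k), Continuous fun y => f.mono j y := by
      intro j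
      have : (fun y => f.mono j y) = fun y => phi y (Qpt f j) := by
        funext y; rw [phi_Q]
      rw [this]
      exact continuous_phi _
    have hOopen : ∀ j : Fin f.k,
        IsOpen {y : Fin n → ℝ | ∀ m, m ≠ j → f.mono j y < f.mono m y} := by
      intro j
      have : {y : Fin n → ℝ | ∀ m, m ≠ j → f.mono j y < f.mono m y}
          = ⋂ m, {y | m ≠ j → f.mono j y < f.mono m y} := by
        ext y; simp [Set.mem_iInter]
      rw [this]
      refine isOpen_iInter_of_finite fun m => ?_
      by_cases hm : m ≠ j
      · have : {y : Fin n → ℝ | m ≠ j → f.mono j y < f.mono m y}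
            = {y | f.mono j y < f.mono m y} := by ext y; simp [hm]
        rw [this]
        exact isOpen_lt (hmono_cont j) (hmono_cont m)
      · have : {y : Fin n → ℝ | m ≠ j → f.mono j y < f.mono m y} = Set.univ := by
          ext y; simp [hm]
        rw [this]
        exact isOpen_univ
    set O₁ : Set (Fin n → ℝ) := {y | ∀ m, m ≠ j₀ → f.mono j₀ y < f.mono m y}
      with hO₁def
    set O₂ : Set (Fin n → ℝ) := ⋃ j : Fin f.k,
      (if j ≠ j₀ then {y | ∀ m, m ≠ j → f.mono j y < f.mono m y} else ∅) with hO₂def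
    have hO₁ : IsOpen O₁ := hOopen j₀
    have hO₂ : IsOpen O₂ := isOpen_iUnion fun j => by
      split_ifs
      · exact hOopen j
      · exact isOpen_empty
    have hcover : U ⊆ O₁ ∪ O₂ := by
      intro x hx
      obtain ⟨j, hj⟩ := exists_argmin f x
      by_cases hjj : j = j₀
      · left
        subst hjj
        exact fun m hm => hstrict x hx j hj m hm
      · right
        exact Set.mem_iUnion.2 ⟨j, by
          rw [if_pos hjj]
          exact fun m hm => hstrict x hx j hj m hm⟩
    have hne₁ : (U ∩ O₁).Nonempty :=
      ⟨x₀, hx₀U, fun m hm => hstrict x₀ hx₀U j₀ hj₀ m hm⟩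
    have hne₂ : (U ∩ O₂).Nonempty := by
      obtain ⟨j, hj⟩ := exists_argmin f x₁
      have hjj : j ≠ j₀ := by
        intro hEq
        subst hEq
        have := eval_le f m₁ x₁
        linarith
      exact ⟨x₁, hx₁U, Set.mem_iUnion.2 ⟨j, by
        rw [if_pos hjj]
        exact fun m hm => hstrict x₁ hx₁U j hj m hm⟩⟩
    obtain ⟨z, hzU, hz₁, hz₂⟩ :=
      hUconv.isPreconnected O₁ O₂ hO₁ hO₂ hcover hne₁ hne₂
    obtain ⟨j, hj⟩ := Set.mem_iUnion.1 hz₂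
    by_cases hjj : j ≠ j₀
    · rw [if_pos hjj] at hj
      have h1 := hz₁ j hjj
      have h2 := hj j₀ (Ne.symm hjj)
      linarith
    · rw [if_neg hjj] at hj
      exact hj
  -- Lemma E: extension to the closed normal cone
  set Cb : Set (Fin n → ℝ) := {y | ∀ m, phi y v ≤ phi y (Qpt g m)} with hCb
  have hE : ∀ y ∈ Cb, ∀ i, phi y (Qpt f j₀) ≤ phi y (Qpt f i) := by
    intro y hy i
    by_contra hcon
    push_neg at hcon
    set A := phi x₀ (Qpt f i) - phi x₀ (Qpt f j₀) with hA
    set B := phi y (Qpt f i) - phi y (Qpt f j₀) with hB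
    have hA0 : 0 ≤ A := by
      have := hD x₀ hx₀U i
      rw [hA, phi_Q, phi_Q]
      linarith
    have hB0 : B < 0 := by rw [hB]; linarith
    have hd : 0 < A + 1 - B := by linarith
    set s := (A + 1)/(A + 1 - B) with hs
    have hs1 : s < 1 := (div_lt_one hd).2 (by linarith)
    have hs0 : 0 < s := div_pos (by linarith) hd
    set xs := (1 - s) • x₀ + s • y with hxs
    have hxsU : xs ∈ U := by
      intro m hm
      have h1 := hx₀ m hm
      have h2 := hy m
      rw [hxs, phi_affine x₀ y (by ring : (1-s) + s = 1),
        phi_affine x₀ y (by ring : (1-s) + s = 1)]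
      nlinarith
    have hpos := hD xs hxsU i
    have hphi : phi xs (Qpt f j₀) ≤ phi xs (Qpt f i) := by
      rw [phi_Q, phi_Q]; exact hpos
    have hcalc : phi xs (Qpt f i) - phi xs (Qpt f j₀) = (1 - s)*A + s*B := by
      rw [hxs, phi_affine x₀ y (by ring : (1-s) + s = 1),
        phi_affine x₀ y (by ring : (1-s) + s = 1), hA, hB]
      ring
    have hneg : (1 - s)*A + s*B < 0 := by
      have h5 : (1 - s)*A + s*B = B/(A + 1 - B) := by
        rw [hs]
        field_simp
        ring
      rw [h5]
      exact div_neg_of_neg_of_pos hB0 hd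
    linarith
  -- the cone step
  have hcone : ∀ i : Fin f.k, ∃ τ : ℝ, 0 < τ ∧
      v + τ • (Qpt f i - Qpt f j₀) ∈ g.newton := by
    intro i
    set u : (Fin n → ℝ) × ℝ := Qpt f i - Qpt f j₀ with hu
    set e : (Fin n → ℝ) × ℝ := ((0 : Fin n → ℝ), (1 : ℝ)) with he
    set r : Fin (g.k + 1) → (Fin n → ℝ) × ℝ :=
      Fin.snoc (fun m => Qpt g m - v) e with hr
    have humem : u ∈ csupp r Finset.univ := by
      by_contra hucon
      obtain ⟨ℓ, u', hlt, hgt⟩ := geometric_hahn_banach_point_closed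
        (csupp_univ_convex r) (csupp_univ_isClosed r) hucon
      have h0K : (0 : (Fin n → ℝ) × ℝ) ∈ csupp r Finset.univ :=
        ⟨0, fun i' => le_refl 0, fun i' _ => rfl, by simp⟩
      have hu'0 : u' < 0 := by
        have := hgt 0 h0K
        rwa [map_zero] at this
      have hlu : ℓ u < 0 := hlt.trans hu'0
      have hgen : ∀ d, 0 ≤ ℓ (r d) := by
        intro d
        by_contra hneg
        push_neg at hneg
        set σ := (u' - 1)/ℓ (r d) with hσ
        have hσ0 : 0 ≤ σ := div_nonneg_of_nonpos (by linarith) hneg.le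
        have hmem : σ • r d ∈ csupp r Finset.univ := by
          refine ⟨fun i' => if i' = d then σ else 0, ?_,
            fun i' hi' => absurd (Finset.mem_univ i') hi', ?_⟩
          · intro i'
            by_cases hid : i' = d
            · simpa [hid] using hσ0
            · simp [hid]
          · calc σ • r d = ∑ i', if i' = d then σ • r i' else 0 := by
                  rw [Finset.sum_ite_eq']
                  simp
            _ = ∑ i', (if i' = d then σ else 0) • r i' := by
                  refine Finset.sum_congr rfl fun i' _ => ?_
                  rw [ite_smul, zero_smul]
        have h6 := hgt _ hmem
        rw [map_smul, smul_eq_mul, hσ, div_mul_cancel₀ _ hneg.ne] at h6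
        linarith
      have hQ0 : ∀ m : Fin g.k, 0 ≤ ℓ (Qpt g m - v) := by
        intro m
        have := hgen m.castSucc
        rwa [hr, Fin.snoc_castSucc] at this
      have he0 : 0 ≤ ℓ e := by
        have := hgen (Fin.last g.k)
        rwa [hr, Fin.snoc_last] at this
      set ε := -ℓ u / (|phi x₀ u| + 1) with hε
      have hε0 : 0 < ε := div_pos (by linarith) (by positivity)
      set L2 : ((Fin n → ℝ) × ℝ) →ₗ[ℝ] ℝ := ℓ.toLinearMap + ε • phiL x₀
        with hL2def
      have hL2 : ∀ p, L2 p = ℓ p + ε * phi x₀ p := fun p => rfl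
      have hL2u : L2 u < 0 := by
        rw [hL2]
        have h1 : ε * phi x₀ u ≤ ε * |phi x₀ u| :=
          mul_le_mul_of_nonneg_left (le_abs_self _) hε0.le
        have h2 : ε * (|phi x₀ u| + 1) = -ℓ u := by
          rw [hε, div_mul_cancel₀ _ (by positivity : (0:ℝ) < |phi x₀ u| + 1).ne']
        nlinarith [hε0]
      have hx₀nonneg : ∀ m, 0 ≤ phi x₀ (Qpt g m - v) := by
        intro m
        rw [phi_apply, map_sub]
        by_cases hQm : Qpt g m = v
        · rw [hQm]
          simp
        · have := hx₀ m hQm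
          rw [phi_apply, phi_apply] at this
          linarith
      have hL2Q : ∀ m, 0 ≤ L2 (Qpt g m - v) := fun m => by
        rw [hL2]
        exact add_nonneg (hQ0 m) (mul_nonneg hε0.le (hx₀nonneg m))
      have hL2e : 0 < L2 e := by
        rw [hL2]
        have h9 : phi x₀ e = 1 := by rw [he]; exact phi_e x₀
        rw [h9, mul_one]
        linarith
      set y : Fin n → ℝ := fun j => L2 ((Pi.single j 1 : Fin n → ℝ), 0) / L2 e
        with hy
      have hyphi : ∀ p, phi y p = L2 p / L2 e := by
        intro p
        rw [hy, he]
        exact phi_normalized L2 (by rw [← he]; exact hL2e.ne') p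
      have hyCb : y ∈ Cb := by
        intro m
        have h1 := hL2Q m
        have h2 : phi y (Qpt g m) - phi y v = L2 (Qpt g m - v) / L2 e := by
          rw [hyphi, hyphi, ← sub_div]
          congr 1
          rw [map_sub]
        have h3 : 0 ≤ L2 (Qpt g m - v) / L2 e := div_nonneg h1 hL2e.le
        linarith [h2, h3]
      have hEy := hE y hyCb i
      have hneg2 : phi y u < 0 := by
        rw [hyphi]
        exact div_neg_of_neg_of_pos hL2u hL2e
      have hpos2 : 0 ≤ phi y u := by
        rw [hu, phi_apply, map_sub]
        rw [phi_apply, phi_apply] at hEy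
        linarith
      linarith
    obtain ⟨tt, htt0, -, httu⟩ := humem
    set T := ∑ m : Fin g.k, tt m.castSucc with hT
    have hT0 : 0 ≤ T := Finset.sum_nonneg fun m _ => htt0 _
    have hτ0' : (0:ℝ) < 1/(T+1) := by positivity
    refine ⟨1/(T+1), hτ0', ?_⟩
    set τ : ℝ := 1/(T+1) with hτ
    have hsplit : u = (∑ m : Fin g.k, tt m.castSucc • (Qpt g m - v))
        + tt (Fin.last g.k) • e := by
      rw [httu, Fin.sum_univ_castSucc]
      congr 1
      · refine Finset.sum_congr rfl fun m _ => ?_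
        rw [hr, Fin.snoc_castSucc]
      · rw [hr, Fin.snoc_last]
    have hz₀mem : (τ • v + ∑ m : Fin g.k, (τ * tt m.castSucc) • Qpt g m)
        ∈ g.newton := by
      set wfun : Fin (g.k + 1) → ℝ :=
        Fin.snoc (fun m : Fin g.k => τ * tt m.castSucc) τ with hwfun
      set zfun : Fin (g.k + 1) → (Fin n → ℝ) × ℝ := Fin.snoc (Qpt g) v
        with hzfun
      have hcsum := (newton_convex g).sum_mem
        (t := (Finset.univ : Finset (Fin (g.k + 1))))
        (w := wfun) (z := zfun) ?_ ?_ ?_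
      · have heq2 : ∑ d : Fin (g.k+1), wfun d • zfun d
            = τ • v + ∑ m : Fin g.k, (τ * tt m.castSucc) • Qpt g m := by
          rw [Fin.sum_univ_castSucc]
          simp only [hwfun, hzfun, Fin.snoc_castSucc, Fin.snoc_last]
          rw [add_comm]
        rwa [heq2] at hcsum
      · intro d _
        induction d using Fin.lastCases with
        | last =>
          simp only [hwfun, Fin.snoc_last]
          exact hτ0'.le
        | cast m =>
          simp only [hwfun, Fin.snoc_castSucc]
          exact mul_nonneg hτ0'.le (htt0 _)
      · rw [Fin.sum_univ_castSucc]
        simp only [hwfun, Fin.snoc_castSucc, Fin.snoc_last]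
        rw [← Finset.mul_sum, ← hT, hτ]
        have hT1 : T + 1 ≠ 0 := by positivity
        field_simp
      · intro d _
        induction d using Fin.lastCases with
        | last =>
          simp only [hzfun, Fin.snoc_last]
          exact hv.1
        | cast m =>
          simp only [hzfun, Fin.snoc_castSucc]
          exact Qpt_mem_newton g m
    have hfinal : v + τ • u
        = (τ • v + ∑ m : Fin g.k, (τ * tt m.castSucc) • Qpt g m)
          + ((0 : Fin n → ℝ), τ * tt (Fin.last g.k)) := by
      rw [hsplit, smul_add, Finset.smul_sum]
      have h7 : ∀ m : Fin g.k, τ • (tt m.castSucc • (Qpt g m - v))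
          = (τ * tt m.castSucc) • Qpt g m - (τ * tt m.castSucc) • v := fun m => by
        rw [smul_smul, smul_sub]
      rw [Finset.sum_congr rfl fun m _ => h7 m, Finset.sum_sub_distrib,
        ← Finset.sum_smul, ← Finset.mul_sum, ← hT]
      have h8 : τ • (tt (Fin.last g.k) • e)
          = (((0 : Fin n → ℝ), τ * tt (Fin.last g.k)) : (Fin n → ℝ) × ℝ) := by
        rw [smul_smul, he, Prod.smul_mk, smul_zero, smul_eq_mul, mul_one]
      rw [h8]
      have h9 : τ • v = v - (τ * T) • v := by
        have h10 : τ + τ * T = 1 := by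
          rw [hτ]
          field_simp
          ring
        rw [eq_sub_iff_add_eq, ← add_smul, h10, one_smul]
      rw [h9]
      abel
    rw [hfinal]
    exact newton_up g hz₀mem (mul_nonneg hτ0'.le (htt0 _))
  choose τ hτ0 hτmem using hcone
  set t := Finset.univ.inf' ⟨j₀, Finset.mem_univ _⟩ τ with htdef
  have ht0 : 0 < t := (Finset.lt_inf'_iff _).2 fun i _ => hτ0 i
  refine ⟨t, ht0, v - t • Qpt f j₀, ?_, ?_⟩
  · exact ⟨Qpt f j₀, Qpt_mem_newton f j₀, by
      show t • Qpt f j₀ + (v - t • Qpt f j₀) = v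
      abel⟩
  · have hkey : ∀ i : Fin f.k, v + t • (Qpt f i - Qpt f j₀) ∈ g.newton := by
      intro i
      have hti : t ≤ τ i := Finset.inf'_le _ (Finset.mem_univ i)
      set θ := t / τ i with hθ
      have hθ0 : 0 ≤ θ := div_nonneg ht0.le (hτ0 i).le
      have hθ1 : θ ≤ 1 := (div_le_one (hτ0 i)).2 hti
      have hcomb := (newton_convex g) hv.1 (hτmem i)
        (by linarith : (0:ℝ) ≤ 1 - θ) hθ0 (by ring)
      have heq : (1 - θ) • v + θ • (v + τ i • (Qpt f i - Qpt f j₀))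
          = v + t • (Qpt f i - Qpt f j₀) := by
        rw [smul_add, ← add_assoc, ← add_smul, sub_add_cancel, one_smul,
          smul_smul, hθ, div_mul_cancel₀ _ (hτ0 i).ne']
      rw [← heq]
      exact hcomb
    rw [Set.image_subset_iff]
    apply convexHull_min ?_ ?_
    · rintro p ⟨i, h1, h2⟩
      show t • p + (v - t • Qpt f j₀) ∈ g.newton
      have hp : p = Qpt f i + ((0 : Fin n → ℝ), p.2 - f.c i) := by
        refine Prod.ext ?_ ?_
        · show p.1 = (fun j => (f.a i j : ℝ)) + 0
          rw [add_zero]; exact h1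
        · show p.2 = f.c i + (p.2 - f.c i)
          ring
      have hdec : t • p + (v - t • Qpt f j₀)
          = (v + t • (Qpt f i - Qpt f j₀))
            + ((0 : Fin n → ℝ), t * (p.2 - f.c i)) := by
        have h4 : (Qpt f i).1 = p.1 := h1.symm
        refine Prod.ext ?_ ?_
        · show t • p.1 + (v.1 - t • (Qpt f j₀).1)
            = (v.1 + t • ((Qpt f i).1 - (Qpt f j₀).1)) + 0
          rw [add_zero, h4, smul_sub]
          abel
        · show t • p.2 + (v.2 - t • (Qpt f j₀).2)
            = (v.2 + t • ((Qpt f i).2 - (Qpt f j₀).2)) + t * (p.2 - f.c i)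
          have h5 : (Qpt f i).2 = f.c i := rfl
          simp only [smul_eq_mul, h5]
          ring
      rw [hdec]
      exact newton_up g (hkey i) (mul_nonneg ht0.le (by linarith))
    · intro y₁ h₁ y₂ h₂ a b ha hb hab
      show t • (a • y₁ + b • y₂) + (v - t • Qpt f j₀) ∈ g.newton
      have heq : t • (a • y₁ + b • y₂) + (v - t • Qpt f j₀)
          = a • (t • y₁ + (v - t • Qpt f j₀))
            + b • (t • y₂ + (v - t • Qpt f j₀)) := by
        rw [smul_add, smul_add, smul_add, smul_comm a t, smul_comm b t,
          add_add_add_comm, ← add_smul, hab, one_smul]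
      rw [heq]
      exact (newton_convex g) h₁ h₂ ha hb hab
end

section
/- Let f be a tropical polynomial in n variables. A point x ∈ ℝⁿ lies in Trop(f) if and only if the linear functional φ_x attains its minimum over the Newton polyhedron N(f) at at least two distinct points of N(f). -/
open Finset

/-!
On each ray `{(a i, c) : c ≥ c i}` the functional `φ_x` is at least `⟨a i, x⟩ + c i ≥ f(x)`, with
equality exactly at the apex `(a i, c i)` of a ray whose monomial attains the minimum. Hence `f(x)` is
the minimum of `φ_x` on `N(f)`, and the minimizers form the convex hull of the minimizing apexes.
There are two of them iff there are two minimizing monomials: distinct monomials have distinct apexes,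
and the hull of a single apex is a point.
-/

section ConvexHullFace

variable {𝕜 E : Type*} [Field 𝕜] [LinearOrder 𝕜] [IsStrictOrderedRing 𝕜] [AddCommGroup E]
  [Module 𝕜 E] {l : E → 𝕜} {m : 𝕜}

theorem Convex.union_halfSpace_gt {K : Set E} (hK : Convex 𝕜 K) (hl : IsLinearMap 𝕜 l)
    (hKm : ∀ y ∈ K, m ≤ l y) : Convex 𝕜 ({y | m < l y} ∪ K) := by
  have hle : ∀ y ∈ {y | m < l y} ∪ K, m ≤ l y := fun y hy => hy.elim le_of_lt (hKm y)
  rw [convex_iff_forall_pos]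
  intro x hx y hy a b ha hb hab
  have hlxy : l (a • x + b • y) = a * l x + b * l y := by
    rw [hl.map_add, hl.map_smul, hl.map_smul, smul_eq_mul, smul_eq_mul]
  have hm : m = a * m + b * m := by rw [← add_mul, hab, one_mul]
  rcases hx with hx | hx
  · left
    show m < l (a • x + b • y)
    rw [hlxy, hm]
    exact add_lt_add_of_lt_of_le (mul_lt_mul_of_pos_left hx ha)
      (mul_le_mul_of_nonneg_left (hle y hy) hb.le)
  rcases hy with hy | hy
  · left
    show m < l (a • x + b • y)
    rw [hlxy, hm]
    exact add_lt_add_of_le_of_lt (mul_le_mul_of_nonneg_left (hKm x hx) ha.le)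
      (mul_lt_mul_of_pos_left hy hb)
  · exact Or.inr (hK hx hy ha.le hb.le hab)

theorem mem_convexHull_sep_of_apply_le {S : Set E} {p : E} (hl : IsLinearMap 𝕜 l)
    (hS : ∀ s ∈ S, m ≤ l s) (hp : p ∈ convexHull 𝕜 S) (hpm : l p ≤ m) :
    p ∈ convexHull 𝕜 {s ∈ S | l s = m} := by
  set F := {s ∈ S | l s = m}
  have hFm : ∀ y ∈ convexHull 𝕜 F, m ≤ l y :=
    convexHull_min (fun s hs => hs.2.ge) (convex_halfSpace_ge hl m)
  have hSsub : S ⊆ {y | m < l y} ∪ convexHull 𝕜 F := fun s hs =>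
    (hS s hs).lt_or_eq.imp id fun h => subset_convexHull 𝕜 F ⟨hs, h.symm⟩
  exact (convexHull_min hSsub ((convex_convexHull 𝕜 F).union_halfSpace_gt hl hFm) hp).resolve_left
    (not_lt.2 hpm)

end ConvexHullFace

theorem isLinearMap_phi {n : ℕ} (x : Fin n → ℝ) : IsLinearMap ℝ (phi x) where
  map_add p q := by
    simp only [phi, Prod.fst_add, Prod.snd_add, Pi.add_apply, mul_add, Finset.sum_add_distrib]
    ring
  map_smul c p := by
    simp only [phi, Prod.smul_fst, Prod.smul_snd, Pi.smul_apply, smul_eq_mul, Finset.mul_sum,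
      mul_add]
    congr 1
    exact Finset.sum_congr rfl fun j _ => by ring

namespace TropPoly

variable {n : ℕ} (f : TropPoly n) (x : Fin n → ℝ)

def rays : Set ((Fin n → ℝ) × ℝ) :=
  {p | ∃ i : Fin f.k, p.1 = (fun j => (f.a i j : ℝ)) ∧ f.c i ≤ p.2}

def vertex (i : Fin f.k) : (Fin n → ℝ) × ℝ :=
  ((fun j => (f.a i j : ℝ)), f.c i)

theorem vertex_mem_newton (i : Fin f.k) : f.vertex i ∈ f.newton :=
  subset_convexHull ℝ _ ⟨i, rfl, le_rfl⟩

theorem vertex_injective : Function.Injective f.vertex := by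
  intro i j h
  simp only [vertex, Prod.mk.injEq, funext_iff, Nat.cast_inj] at h
  exact f.distinct (Prod.ext (funext h.1) h.2)

theorem exists_mono_eq_eval : ∃ i, f.mono i x = f.eval x := by
  obtain ⟨i, -, hi⟩ := Finset.exists_mem_eq_inf' (⟨⟨0, f.hk⟩, Finset.mem_univ _⟩ : univ.Nonempty)
    (fun i => f.mono i x)
  exact ⟨i, hi.symm⟩

theorem eval_le_mono (i : Fin f.k) : f.eval x ≤ f.mono i x :=
  Finset.inf'_le _ (Finset.mem_univ i)

variable {f x}

theorem phi_eq_mono_add {i : Fin f.k} {p : (Fin n → ℝ) × ℝ}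
    (hp : p.1 = fun j => (f.a i j : ℝ)) : phi x p = f.mono i x + (p.2 - f.c i) := by
  simp only [phi, mono, hp, mul_comm (x _)]
  ring

theorem phi_vertex (i : Fin f.k) : phi x (f.vertex i) = f.mono i x :=
  (phi_eq_mono_add rfl).trans (by simp [vertex])

theorem eval_le_phi_of_mem_rays {p : (Fin n → ℝ) × ℝ} (hp : p ∈ f.rays) : f.eval x ≤ phi x p := by
  obtain ⟨i, hp1, hp2⟩ := hp
  rw [phi_eq_mono_add hp1]
  linarith [f.eval_le_mono x i]

theorem eval_le_phi {p : (Fin n → ℝ) × ℝ} (hp : p ∈ f.newton) : f.eval x ≤ phi x p :=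
  convexHull_min (fun _ => eval_le_phi_of_mem_rays) (convex_halfSpace_ge (isLinearMap_phi x) _) hp

theorem exists_eq_vertex_of_mem_rays_of_phi_eq {p : (Fin n → ℝ) × ℝ} (hp : p ∈ f.rays)
    (hpx : phi x p = f.eval x) : ∃ i, f.mono i x = f.eval x ∧ p = f.vertex i := by
  obtain ⟨i, hp1, hp2⟩ := hp
  rw [phi_eq_mono_add hp1] at hpx
  have := f.eval_le_mono x i
  exact ⟨i, by linarith, Prod.ext hp1 (show p.2 = f.c i by linarith)⟩

theorem eq_vertex_of_mem_newton_of_phi_le {i₀ : Fin f.k}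
    (hunique : ∀ i, f.mono i x = f.eval x → i = i₀) {p : (Fin n → ℝ) × ℝ} (hp : p ∈ f.newton)
    (hpx : phi x p ≤ f.eval x) : p = f.vertex i₀ := by
  have hsub : {s ∈ f.rays | phi x s = f.eval x} ⊆ {f.vertex i₀} := by
    rintro s ⟨hs, hsx⟩
    obtain ⟨i, hi, rfl⟩ := exists_eq_vertex_of_mem_rays_of_phi_eq hs hsx
    rw [hunique i hi, Set.mem_singleton_iff]
  simpa using convexHull_mono hsub
    (mem_convexHull_sep_of_apply_le (isLinearMap_phi x) (fun _ => eval_le_phi_of_mem_rays) hp hpx)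

end TropPoly

open TropPoly in
/-- `x ∈ Trop(f)` iff `φ_x` attains its minimum over `N(f)` at at
least two distinct points of `N(f)`. -/
theorem mem_tropSet_iff_two_minimizers {n : ℕ} (f : TropPoly n) (x : Fin n → ℝ) :
    x ∈ f.tropSet ↔
      ∃ p ∈ f.newton, ∃ q ∈ f.newton, p ≠ q ∧
        (∀ r ∈ f.newton, phi x p ≤ phi x r) ∧
        (∀ r ∈ f.newton, phi x q ≤ phi x r) := by
  constructor
  · rintro ⟨i, j, hij, hi, hj⟩
    refine ⟨f.vertex i, f.vertex_mem_newton i, f.vertex j, f.vertex_mem_newton j,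
      f.vertex_injective.ne hij, fun r hr => ?_, fun r hr => ?_⟩
    · rw [phi_vertex, hi]; exact eval_le_phi hr
    · rw [phi_vertex, hj]; exact eval_le_phi hr
  · rintro ⟨p, hp, q, hq, hpq, hpmin, hqmin⟩
    by_contra hx
    obtain ⟨i₀, hi₀⟩ := f.exists_mono_eq_eval x
    have hunique : ∀ i, f.mono i x = f.eval x → i = i₀ := fun i hi =>
      by_contra fun hne => hx ⟨i, i₀, hne, hi, hi₀⟩
    have hmin : ∀ r, (∀ s ∈ f.newton, phi x r ≤ phi x s) → phi x r ≤ f.eval x := fun r hr =>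
      (hr _ (f.vertex_mem_newton i₀)).trans_eq ((phi_vertex i₀).trans hi₀)
    exact hpq ((eq_vertex_of_mem_newton_of_phi_le hunique hp (hmin p hpmin)).trans
      (eq_vertex_of_mem_newton_of_phi_le hunique hq (hmin q hqmin)).symm)
end
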